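/- With γ, c, λ, ρ held fixed, regarding CRB_LB and CRB_LB,W as functions of the effective bandwidth W_e, the ratio CRB_LB(W_e)/CRB_LB,W(W_e) tends to 1 as W_e → ∞; moreover for every W_e > 0 the deficiency satisfies 1 − CRB_LB(W_e)/CRB_LB,W(W_e) < πλ·c²·γ/(2·W_e), so the convergence rate is O(1/W_e). -/

import Mathlib

/-!
For `r > 0` write `s g(r) = α r^{-γ-2} + β r^{-γ}` with `α = s γ²`, `β = s a` and
`a = 4 W_e / c²`. The `β`-term alone gives, after the substitution `y = r^{-γ}` and an
integration by parts, the wideband interference `Z_W(s) = (a s)^{2/γ} Γ(1 - 2/γ) / 2`, and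
`(4/ρ) ∫ exp(-2πλ Z_W(s)) ds` is a Gamma integral equal to `CRB_LB,W`. Since
`1 - e^{-x-y} ≤ 1 - e^{-y} + x e^{-y}`, the `α`-term adds at most
`α ∫ e^{-β r^{-γ}} r^{-γ-1} dr = α / (γ β) = γ / a` to `Z`, so `Z_W ≤ Z ≤ Z_W + γ / a`.
Hence `e^{-B} CRB_LB,W ≤ CRB_LB ≤ CRB_LB,W` with `B = 2πλγ / a = πλc²γ / (2 W_e)`,
and `1 - e^{-B} < B`.
-/

open MeasureTheory Real Filter

open Set Topology

lemma one_sub_exp_neg_mul_nonneg {b y : ℝ} (hb : 0 ≤ b) (hy : 0 ≤ y) :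
    0 ≤ 1 - exp (-b * y) :=
  sub_nonneg.2 (exp_le_one_iff.2 (by rw [neg_mul]; exact neg_nonpos.2 (mul_nonneg hb hy)))

lemma one_sub_exp_neg_mul_le (b y : ℝ) : 1 - exp (-b * y) ≤ b * y := by
  rw [neg_mul]
  linarith [one_sub_le_exp_neg (b * y)]

section OneSubExpRpow

variable {b t : ℝ}

lemma integrableOn_one_sub_exp_neg_mul_mul_rpow (hb : 0 < b) (ht₀ : 0 < t) (ht₁ : t < 1) :
    IntegrableOn (fun y => (1 - exp (-b * y)) * y ^ (-t - 1)) (Ioi 0) := by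
  have hmeas : AEStronglyMeasurable (fun y : ℝ => (1 - exp (-b * y)) * y ^ (-t - 1)) :=
    (by fun_prop : Measurable _).aestronglyMeasurable
  have hnonneg : ∀ y : ℝ, 0 < y → 0 ≤ (1 - exp (-b * y)) * y ^ (-t - 1) := fun y hy =>
    mul_nonneg (one_sub_exp_neg_mul_nonneg hb.le hy.le) (rpow_nonneg hy.le _)
  rw [← Ioc_union_Ioi_eq_Ioi zero_le_one]
  refine IntegrableOn.union ?_ ?_
  · have hdom : IntegrableOn (fun y => b * y ^ (-t)) (Ioc 0 1) :=
      ((intervalIntegrable_iff_integrableOn_Ioc_of_le zero_le_one).1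
        (intervalIntegral.intervalIntegrable_rpow' (by linarith))).const_mul b
    refine hdom.mono' hmeas.restrict
      ((ae_restrict_iff' measurableSet_Ioc).2 (.of_forall fun y hy => ?_))
    rw [norm_of_nonneg (hnonneg y hy.1)]
    have hy₀ : y ≠ 0 := hy.1.ne'
    calc _ ≤ b * y * y ^ (-t - 1) :=
          mul_le_mul_of_nonneg_right (one_sub_exp_neg_mul_le b y) (rpow_nonneg hy.1.le _)
      _ = b * y ^ (-t) := by rw [rpow_sub_one hy₀]; field_simp
  · refine (integrableOn_Ioi_rpow_of_lt (show -t - 1 < -1 by linarith) one_pos).mono'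
      hmeas.restrict ((ae_restrict_iff' measurableSet_Ioi).2 (.of_forall fun y hy => ?_))
    have hy₀ : (0 : ℝ) < y := zero_lt_one.trans hy
    rw [norm_of_nonneg (hnonneg y hy₀)]
    exact mul_le_of_le_one_left (rpow_nonneg hy₀.le _) (by linarith [exp_pos (-b * y)])

lemma integral_one_sub_exp_neg_mul_mul_rpow (hb : 0 < b) (ht₀ : 0 < t) (ht₁ : t < 1) :
    ∫ y in Ioi 0, (1 - exp (-b * y)) * y ^ (-t - 1) = b ^ t * Gamma (1 - t) / t := by
  set u : ℝ → ℝ := fun y => 1 - exp (-b * y)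
  set v : ℝ → ℝ := fun y => -y ^ (-t) / t
  have hu : ∀ y ∈ Ioi (0 : ℝ), HasDerivAt u (b * exp (-b * y)) y := fun y _ => by
    refine (((hasDerivAt_id y).const_mul (-b)).exp.const_sub 1).congr_deriv ?_
    simp [mul_comm]
  have hv : ∀ y ∈ Ioi (0 : ℝ), HasDerivAt v (y ^ (-t - 1)) y := fun y hy => by
    refine ((hasDerivAt_rpow_const (Or.inl (ne_of_gt hy))).neg.div_const t).congr_deriv ?_
    field_simp
  have hu'v : ∀ y, b * exp (-b * y) * v y = -(b / t) * (y ^ (-t) * exp (-b * y ^ (1 : ℝ))) :=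
    fun y => by simp only [v, rpow_one]; ring
  have h_zero : Tendsto (u * v) (𝓝[>] 0) (𝓝 0) := by
    have hlim : Tendsto (fun y : ℝ => b / t * y ^ (1 - t)) (𝓝[>] 0) (𝓝 0) := by
      have h := (continuousAt_rpow_const 0 (1 - t) (Or.inr (by linarith))).tendsto
      rw [zero_rpow (by linarith)] at h
      simpa using (h.mono_left nhdsWithin_le_nhds).const_mul (b / t)
    refine squeeze_zero_norm' ?_ hlim
    filter_upwards [self_mem_nhdsWithin] with y (hy : 0 < y)
    have hu₀ : 0 ≤ u y := one_sub_exp_neg_mul_nonneg hb.le hy.le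
    have hu₁ : u y ≤ b * y := one_sub_exp_neg_mul_le b y
    rw [Pi.mul_apply, norm_mul, norm_of_nonneg hu₀, norm_div, norm_neg,
      norm_of_nonneg (rpow_nonneg hy.le _), norm_of_nonneg ht₀.le]
    calc u y * (y ^ (-t) / t) ≤ b * y * (y ^ (-t) / t) := by gcongr
      _ = b / t * y ^ (1 - t) := by
        rw [sub_eq_add_neg, rpow_add hy, rpow_one]; ring
  have h_infty : Tendsto (u * v) atTop (𝓝 0) := by
    have hu : Tendsto u atTop (𝓝 1) := by
      simpa [u, neg_mul] using tendsto_const_nhds.sub (tendsto_exp_atBot.comp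
        (tendsto_id.const_mul_atTop_of_neg (neg_neg_iff_pos.2 hb)))
    have hv : Tendsto v atTop (𝓝 0) := by
      simpa [v] using (tendsto_rpow_neg_atTop ht₀).neg.div_const t
    rw [← mul_zero 1]
    exact hu.mul hv
  have hu'v_int : IntegrableOn (fun y => b * exp (-b * y) * v y) (Ioi 0) := by
    simp_rw [hu'v]
    exact (integrableOn_rpow_mul_exp_neg_mul_rpow (by linarith) one_pos hb).const_mul _
  rw [integral_Ioi_mul_deriv_eq_deriv_mul hu hv
    (integrableOn_one_sub_exp_neg_mul_mul_rpow hb ht₀ ht₁) hu'v_int h_zero h_infty]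
  simp_rw [hu'v]
  rw [integral_const_mul, integral_rpow_mul_exp_neg_mul_rpow one_pos (by linarith) hb,
    show -(-t + 1) / 1 = t - 1 by ring, show (-t + 1) / 1 = 1 - t by ring, rpow_sub_one hb.ne']
  field_simp
  ring

end OneSubExpRpow

section RpowNegSubstitution

variable {q : ℝ}

lemma integral_comp_rpow_neg_mul_rpow (hq : 0 < q) (f : ℝ → ℝ) :
    ∫ r in Ioi 0, f (r ^ (-q)) * r ^ (-q - 1) = (∫ y in Ioi 0, f y) / q := by
  rw [← integral_comp_rpow_Ioi f (neg_ne_zero.2 hq.ne'), eq_div_iff hq.ne', ← integral_mul_const]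
  refine setIntegral_congr_fun measurableSet_Ioi fun r _ => ?_
  simp only [abs_neg, abs_of_pos hq, smul_eq_mul]
  ring

lemma integrableOn_comp_rpow_neg_mul_rpow_iff (hq : 0 < q) (f : ℝ → ℝ) :
    IntegrableOn (fun r => f (r ^ (-q)) * r ^ (-q - 1)) (Ioi 0) ↔ IntegrableOn f (Ioi 0) := by
  rw [← integrableOn_Ioi_comp_rpow_iff' f (neg_ne_zero.2 hq.ne')]
  simp only [smul_eq_mul, mul_comm]

variable {β : ℝ}

lemma integrableOn_exp_neg_mul_rpow_neg_mul_rpow (hβ : 0 < β) (hq : 0 < q) :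
    IntegrableOn (fun r => exp (-β * r ^ (-q)) * r ^ (-q - 1)) (Ioi 0) :=
  (integrableOn_comp_rpow_neg_mul_rpow_iff hq fun y => exp (-β * y)).2
    (exp_neg_integrableOn_Ioi 0 hβ)

lemma integral_exp_neg_mul_rpow_neg_mul_rpow (hβ : 0 < β) (hq : 0 < q) :
    ∫ r in Ioi 0, exp (-β * r ^ (-q)) * r ^ (-q - 1) = 1 / (q * β) := by
  rw [integral_comp_rpow_neg_mul_rpow hq fun y => exp (-β * y),
    integral_exp_mul_Ioi (neg_neg_iff_pos.2 hβ)]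
  field_simp
  simp

lemma rpow_rpow_neg_two_div_sub_one_mul_rpow (hq : q ≠ 0) {r : ℝ} (hr : 0 < r) :
    (r ^ (-q)) ^ (-(2 / q) - 1) * r ^ (-q - 1) = r := by
  rw [← rpow_mul hr.le, ← rpow_add hr]
  convert rpow_one r using 2
  field_simp
  ring

lemma integrableOn_one_sub_exp_neg_mul_rpow_neg_mul_self (hβ : 0 < β) (hq : 2 < q) :
    IntegrableOn (fun r => (1 - exp (-β * r ^ (-q))) * r) (Ioi 0) := by
  have hq₀ : 0 < q := by linarith
  refine ((integrableOn_comp_rpow_neg_mul_rpow_iff hq₀ _).2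
    (integrableOn_one_sub_exp_neg_mul_mul_rpow hβ (by positivity)
      ((div_lt_one hq₀).2 hq))).congr_fun (fun r hr => ?_) measurableSet_Ioi
  dsimp only
  rw [mul_assoc, rpow_rpow_neg_two_div_sub_one_mul_rpow hq₀.ne' hr]

lemma integral_one_sub_exp_neg_mul_rpow_neg_mul_self (hβ : 0 < β) (hq : 2 < q) :
    ∫ r in Ioi 0, (1 - exp (-β * r ^ (-q))) * r = β ^ (2 / q) * Gamma (1 - 2 / q) / 2 := by
  have hq₀ : 0 < q := by linarith
  have h := integral_comp_rpow_neg_mul_rpow hq₀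
    fun y => (1 - exp (-β * y)) * y ^ (-(2 / q) - 1)
  rw [integral_one_sub_exp_neg_mul_mul_rpow hβ (by positivity) ((div_lt_one hq₀).2 hq)] at h
  rw [setIntegral_congr_fun measurableSet_Ioi fun r (hr : 0 < r) => by
    rw [mul_assoc, rpow_rpow_neg_two_div_sub_one_mul_rpow hq₀.ne' hr]] at h
  rw [h]
  field_simp

end RpowNegSubstitution

section TwoTermInterference

variable {α β γ : ℝ}

lemma one_sub_exp_neg_sub_mul_rpow_mul_self_mem_Icc (hα : 0 ≤ α) {r : ℝ} (hr : 0 < r) :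
    (1 - exp (-α * r ^ (-γ - 2) - β * r ^ (-γ))) * r ∈ Icc ((1 - exp (-β * r ^ (-γ))) * r)
      ((1 - exp (-β * r ^ (-γ))) * r + α * (exp (-β * r ^ (-γ)) * r ^ (-γ - 1))) := by
  have hx : 0 ≤ α * r ^ (-γ - 2) := by positivity
  have hY : 0 < exp (-β * r ^ (-γ)) := exp_pos _
  have hsplit : exp (-α * r ^ (-γ - 2) - β * r ^ (-γ))
      = exp (-(α * r ^ (-γ - 2))) * exp (-β * r ^ (-γ)) := by
    rw [← exp_add]; ring_nf
  have hxr : α * r ^ (-γ - 2) * r = α * r ^ (-γ - 1) := by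
    rw [show -γ - 2 = (-γ - 1) - 1 by ring, rpow_sub_one hr.ne']
    field_simp
  rw [hsplit]
  constructor
  · linear_combination mul_le_mul_of_nonneg_left (exp_le_one_iff.2 (neg_nonpos.2 hx))
      (mul_nonneg hY.le hr.le)
  · linear_combination mul_le_mul_of_nonneg_left (one_sub_le_exp_neg (α * r ^ (-γ - 2)))
      (mul_nonneg hY.le hr.le) + exp (-β * r ^ (-γ)) * hxr

lemma integral_one_sub_exp_neg_sub_mul_rpow_mul_self_mem_Icc (hα : 0 ≤ α) (hβ : 0 < β)
    (hγ : 2 < γ) :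
    ∫ r in Ioi 0, (1 - exp (-α * r ^ (-γ - 2) - β * r ^ (-γ))) * r ∈
      Icc (β ^ (2 / γ) * Gamma (1 - 2 / γ) / 2)
        (β ^ (2 / γ) * Gamma (1 - 2 / γ) / 2 + α / (γ * β)) := by
  have hγ₀ : 0 < γ := by linarith
  have hW := integrableOn_one_sub_exp_neg_mul_rpow_neg_mul_self hβ hγ
  have hE := (integrableOn_exp_neg_mul_rpow_neg_mul_rpow hβ hγ₀).const_mul α
  have hF :
      IntegrableOn (fun r => (1 - exp (-α * r ^ (-γ - 2) - β * r ^ (-γ))) * r) (Ioi 0) := by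
    refine (hW.add hE).mono' (by fun_prop : Measurable _).aestronglyMeasurable.restrict
      ((ae_restrict_iff' measurableSet_Ioi).2 (.of_forall fun r (hr : 0 < r) => ?_))
    have hW₀ : 0 ≤ (1 - exp (-β * r ^ (-γ))) * r :=
      mul_nonneg (one_sub_exp_neg_mul_nonneg hβ.le (by positivity)) hr.le
    obtain ⟨h₁, h₂⟩ := one_sub_exp_neg_sub_mul_rpow_mul_self_mem_Icc (β := β) hα hr
    rw [norm_of_nonneg (hW₀.trans h₁)]
    exact h₂
  constructor
  · rw [← integral_one_sub_exp_neg_mul_rpow_neg_mul_self hβ hγ]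
    exact setIntegral_mono_on hW hF measurableSet_Ioi fun r hr =>
      (one_sub_exp_neg_sub_mul_rpow_mul_self_mem_Icc hα hr).1
  · calc _ ≤ ∫ r in Ioi 0, ((1 - exp (-β * r ^ (-γ))) * r
              + α * (exp (-β * r ^ (-γ)) * r ^ (-γ - 1))) :=
          setIntegral_mono_on hF (hW.add hE) measurableSet_Ioi fun r hr =>
            (one_sub_exp_neg_sub_mul_rpow_mul_self_mem_Icc hα hr).2
      _ = _ := by
        rw [integral_add hW hE, integral_const_mul,
          integral_one_sub_exp_neg_mul_rpow_neg_mul_self hβ hγ,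
          integral_exp_neg_mul_rpow_neg_mul_rpow hβ hγ₀]
        ring

end TwoTermInterference

namespace CRB

noncomputable def g (γ c We r : ℝ) : ℝ := r ^ (-γ - 2) * (γ ^ 2 + 4 * We * r ^ 2 / c ^ 2)

noncomputable def Z (γ c We s : ℝ) : ℝ := ∫ r in Ioi 0, (1 - exp (-s * g γ c We r)) * r

noncomputable def lowerBound (γ c lam ρ We : ℝ) : ℝ :=
  4 / ρ * ∫ s in Ioi 0, exp (-(2 * π * lam * Z γ c We s))

noncomputable def widebandLowerBound (γ c lam ρ We : ℝ) : ℝ :=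
  c ^ 2 / (ρ * We) * (π * lam) ^ (-(γ / 2)) * Gamma (1 - 2 / γ) ^ (-(γ / 2)) * Gamma (1 + γ / 2)

variable {γ c lam ρ We s : ℝ}

lemma neg_mul_g {r : ℝ} (hc : c ≠ 0) (hr : 0 < r) :
    -s * g γ c We r = -(s * γ ^ 2) * r ^ (-γ - 2) - s * (4 * We / c ^ 2) * r ^ (-γ) := by
  rw [g, rpow_sub hr, rpow_two]
  field_simp
  ring

lemma Z_mem_Icc (hγ : 2 < γ) (hc : c ≠ 0) (hWe : 0 < We) (hs : 0 < s) :
    Z γ c We s ∈ Icc ((s * (4 * We / c ^ 2)) ^ (2 / γ) * Gamma (1 - 2 / γ) / 2)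
      ((s * (4 * We / c ^ 2)) ^ (2 / γ) * Gamma (1 - 2 / γ) / 2 + γ * c ^ 2 / (4 * We)) := by
  have hZ : Z γ c We s = ∫ r in Ioi 0,
      (1 - exp (-(s * γ ^ 2) * r ^ (-γ - 2) - s * (4 * We / c ^ 2) * r ^ (-γ))) * r :=
    setIntegral_congr_fun measurableSet_Ioi fun r hr => by rw [neg_mul_g hc hr]
  have hslack : s * γ ^ 2 / (γ * (s * (4 * We / c ^ 2))) = γ * c ^ 2 / (4 * We) := by
    field_simp
  rw [hZ, ← hslack]
  exact integral_one_sub_exp_neg_sub_mul_rpow_mul_self_mem_Icc (by positivity) (by positivity) hγ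

lemma exp_neg_Z_mem_Icc (hγ : 2 < γ) (hc : c ≠ 0) (hlam : 0 < lam) (hWe : 0 < We)
    (hs : 0 < s) :
    exp (-(2 * π * lam * Z γ c We s)) ∈
      Icc (exp (-(π * lam * c ^ 2 * γ / (2 * We))) *
          exp (-(π * lam * Gamma (1 - 2 / γ) * (4 * We / c ^ 2) ^ (2 / γ)) * s ^ (2 / γ)))
        (exp (-(π * lam * Gamma (1 - 2 / γ) * (4 * We / c ^ 2) ^ (2 / γ)) * s ^ (2 / γ))) := by
  obtain ⟨hlow, hup⟩ := Z_mem_Icc hγ hc hWe hs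
  have hcoef : 0 ≤ 2 * π * lam := by positivity
  have hZW : 2 * π * lam * ((s * (4 * We / c ^ 2)) ^ (2 / γ) * Gamma (1 - 2 / γ) / 2)
      = π * lam * Gamma (1 - 2 / γ) * (4 * We / c ^ 2) ^ (2 / γ) * s ^ (2 / γ) := by
    rw [mul_rpow hs.le (by positivity)]
    ring
  have hslack : 2 * π * lam * (γ * c ^ 2 / (4 * We)) = π * lam * c ^ 2 * γ / (2 * We) := by
    field_simp
    ring
  rw [mem_Icc, ← exp_add, exp_le_exp, exp_le_exp]
  constructor
  · linarith [mul_le_mul_of_nonneg_left hup hcoef]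
  · linarith [mul_le_mul_of_nonneg_left hlow hcoef]

@[fun_prop]
lemma measurable_Z : Measurable (Z γ c We) := by
  unfold Z g
  exact (by fun_prop : Measurable fun p : ℝ × ℝ =>
    (1 - exp (-p.1 * (p.2 ^ (-γ - 2) * (γ ^ 2 + 4 * We * p.2 ^ 2 / c ^ 2)))) * p.2)
    |>.stronglyMeasurable.integral_prod_right'.measurable

lemma Gamma_one_sub_two_div_pos (hγ : 2 < γ) : 0 < Gamma (1 - 2 / γ) :=
  Gamma_pos_of_pos (sub_pos.2 ((div_lt_one (by linarith)).2 hγ))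

lemma widebandLowerBound_pos (hγ : 2 < γ) (hc : c ≠ 0) (hlam : 0 < lam) (hρ : 0 < ρ)
    (hWe : 0 < We) :
    0 < widebandLowerBound γ c lam ρ We := by
  have := Gamma_one_sub_two_div_pos hγ
  have := Gamma_pos_of_pos (show 0 < 1 + γ / 2 by positivity)
  unfold widebandLowerBound
  positivity

lemma widebandLowerBound_eq_integral (hγ : 2 < γ) (hc : c ≠ 0) (hlam : 0 < lam)
    (hWe : 0 < We) :
    widebandLowerBound γ c lam ρ We = 4 / ρ * ∫ s in Ioi 0,
      exp (-(π * lam * Gamma (1 - 2 / γ) * (4 * We / c ^ 2) ^ (2 / γ)) * s ^ (2 / γ)) := by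
  have hΓ := Gamma_one_sub_two_div_pos hγ
  rw [integral_exp_neg_mul_rpow (by positivity) (by positivity), mul_rpow (by positivity)
    (by positivity), mul_rpow (by positivity) hΓ.le, ← rpow_mul (by positivity),
    show 2 / γ * (-1 / (2 / γ)) = -1 by field_simp, rpow_neg_one,
    show -1 / (2 / γ) = -(γ / 2) by field_simp,
    show 1 / (2 / γ) + 1 = 1 + γ / 2 by field_simp; ring, widebandLowerBound]
  field_simp

lemma lowerBound_mem_Icc (hγ : 2 < γ) (hc : c ≠ 0) (hlam : 0 < lam) (hρ : 0 < ρ)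
    (hWe : 0 < We) :
    lowerBound γ c lam ρ We ∈ Icc
      (exp (-(π * lam * c ^ 2 * γ / (2 * We))) * widebandLowerBound γ c lam ρ We)
      (widebandLowerBound γ c lam ρ We) := by
  set K := π * lam * Gamma (1 - 2 / γ) * (4 * We / c ^ 2) ^ (2 / γ)
  have hK : 0 < K := by have := Gamma_one_sub_two_div_pos hγ; positivity
  have hφ : IntegrableOn (fun s => exp (-K * s ^ (2 / γ))) (Ioi 0) := by
    simpa using integrableOn_rpow_mul_exp_neg_mul_rpow (s := 0) (by norm_num)
      (show 0 < 2 / γ by positivity) hK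
  have hf : IntegrableOn (fun s => exp (-(2 * π * lam * Z γ c We s))) (Ioi 0) := by
    refine hφ.mono' (by fun_prop) ?_
    refine (ae_restrict_iff' measurableSet_Ioi).2 (.of_forall fun s hs => ?_)
    rw [norm_of_nonneg (exp_pos _).le]
    exact (exp_neg_Z_mem_Icc hγ hc hlam hWe hs).2
  obtain ⟨hlow, hup⟩ : ∫ s in Ioi 0, exp (-(2 * π * lam * Z γ c We s)) ∈
      Icc (exp (-(π * lam * c ^ 2 * γ / (2 * We))) * ∫ s in Ioi 0, exp (-K * s ^ (2 / γ)))
        (∫ s in Ioi 0, exp (-K * s ^ (2 / γ))) := by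
    rw [← integral_const_mul]
    exact ⟨setIntegral_mono_on (hφ.const_mul _) hf measurableSet_Ioi fun s hs =>
        (exp_neg_Z_mem_Icc hγ hc hlam hWe hs).1,
      setIntegral_mono_on hf hφ measurableSet_Ioi fun s hs =>
        (exp_neg_Z_mem_Icc hγ hc hlam hWe hs).2⟩
  have hρ' : 0 ≤ 4 / ρ := by positivity
  rw [lowerBound, widebandLowerBound_eq_integral hγ hc hlam hWe, mul_left_comm]
  exact ⟨mul_le_mul_of_nonneg_left hlow hρ', mul_le_mul_of_nonneg_left hup hρ'⟩

end CRB

/-- Regarding `CRB_LB` and `CRB_LB,W` as functions of the effective bandwidth `W_e`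
(with `γ, c, λ, ρ` fixed), the ratio `CRB_LB(W_e)/CRB_LB,W(W_e)` tends to `1` as
`W_e → ∞`, and for every `W_e > 0` the deficiency satisfies
`1 − CRB_LB(W_e)/CRB_LB,W(W_e) < πλ·c²·γ/(2·W_e)`. -/
theorem CRB_LB_ratio_tendsto_one (γ c lam ρ : ℝ)
    (hγ : 2 < γ) (hc : 0 < c) (hlam : 0 < lam) (hρ : 0 < ρ)
    (CRB_LB CRB_LBW : ℝ → ℝ)
    (hLB : ∀ We > 0, CRB_LB We = (4 / ρ) * ∫ s in Set.Ioi (0 : ℝ),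
      Real.exp (-(2 * π * lam *
        ∫ r in Set.Ioi (0 : ℝ),
          (1 - Real.exp (-s * (r ^ (-γ - 2) * (γ ^ 2 + 4 * We * r ^ 2 / c ^ 2)))) * r)))
    (hLBW : ∀ We > 0, CRB_LBW We = c ^ 2 / (ρ * We) * (π * lam) ^ (-(γ / 2))
          * Real.Gamma (1 - 2 / γ) ^ (-(γ / 2)) * Real.Gamma (1 + γ / 2)) :
    Tendsto (fun We => CRB_LB We / CRB_LBW We) atTop (nhds 1) ∧
    ∀ We > 0, 1 - CRB_LB We / CRB_LBW We < π * lam * c ^ 2 * γ / (2 * We) := by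
  set B : ℝ → ℝ := fun We => π * lam * c ^ 2 * γ / (2 * We)
  have hratio : ∀ We > 0, CRB_LB We / CRB_LBW We ∈ Icc (exp (-B We)) 1 := by
    intro We hWe
    have hpos := CRB.widebandLowerBound_pos hγ hc.ne' hlam hρ hWe
    rw [show CRB_LB We = CRB.lowerBound γ c lam ρ We from hLB We hWe,
      show CRB_LBW We = CRB.widebandLowerBound γ c lam ρ We from hLBW We hWe, mem_Icc,
      le_div_iff₀ hpos, div_le_one hpos]
    exact CRB.lowerBound_mem_Icc hγ hc.ne' hlam hρ hWe
  have hB : Tendsto B atTop (nhds 0) :=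
    tendsto_const_nhds.div_atTop (tendsto_id.const_mul_atTop two_pos)
  refine ⟨tendsto_of_tendsto_of_tendsto_of_le_of_le' ?_ tendsto_const_nhds
    (eventually_gt_atTop 0 |>.mono fun We hWe => (hratio We hWe).1)
    (eventually_gt_atTop 0 |>.mono fun We hWe => (hratio We hWe).2), fun We hWe => ?_⟩
  · simpa using hB.neg.rexp
  · have hBpos : 0 < B We := by positivity
    linarith [(hratio We hWe).1, one_sub_lt_exp_neg hBpos.ne']
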